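/- arXiv:2206.11456 — 2 statements merged into one kernel-verified Lean document; each statement's English description precedes it below -/
import Mathlib

section
/- The ideal hyperbolic Delaunay quantity for an edge and its Ptolemy flip are anti-related: if D(e) = (a²+b²−e²)/(2ab) + (c²+d²−e²)/(2cd) is the Delaunay quantity for edge e, and e' = (ac+bd)/e is the flipped edge (with boundary edges relabeled appropriately as a,d for one triangle and c,b for the other), then D(e) < 0 implies D'(e') > 0, where D'(e') = (a²+d²−e'²)/(2ad) + (c²+b²−e'²)/(2cb). -/
/-!
Clearing denominators, the Ptolemy relation `e e' = a c + b d` turns the Delaunay quantity of the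
flipped edge into an exact negative multiple of the original one:
`D'(e') = -((a c + b d) / e²) · D(e)`. Since the factor `(a c + b d) / e²` is positive, the two
quantities have opposite signs.
-/

noncomputable section

def delaunayTerm (e a b : ℝ) : ℝ :=
  (a ^ 2 + b ^ 2 - e ^ 2) / (2 * a * b)

/-- The Delaunay quantity of an edge `e` shared by the triangles `(e, a, b)` and `(e, c, d)`. -/
def delaunayQuantity (e a b c d : ℝ) : ℝ :=
  delaunayTerm e a b + delaunayTerm e c d

theorem delaunayQuantity_ptolemy_flip {a b c d e : ℝ}
    (ha : a ≠ 0) (hb : b ≠ 0) (hc : c ≠ 0) (hd : d ≠ 0) (he : e ≠ 0) :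
    delaunayQuantity ((a * c + b * d) / e) a d c b =
      (a * c + b * d) / e ^ 2 * -delaunayQuantity e a b c d := by
  unfold delaunayQuantity delaunayTerm
  field_simp
  ring

end

/-- The ideal hyperbolic Delaunay quantity for an edge and its Ptolemy flip are
anti-related: if the Delaunay quantity of edge `e` is negative, the Delaunay
quantity of the flipped edge `e' = (ac+bd)/e` (in the new triangles `(e',a,d)`
and `(e',c,b)`) is positive. -/
theorem delaunay_quantity_flip (a b c d e : ℝ)
    (ha : 0 < a) (hb : 0 < b) (hc : 0 < c) (hd : 0 < d) (he : 0 < e)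
    (hD : (a ^ 2 + b ^ 2 - e ^ 2) / (2 * a * b) +
          (c ^ 2 + d ^ 2 - e ^ 2) / (2 * c * d) < 0) :
    (a ^ 2 + d ^ 2 - ((a * c + b * d) / e) ^ 2) / (2 * a * d) +
      (c ^ 2 + b ^ 2 - ((a * c + b * d) / e) ^ 2) / (2 * c * b) > 0 := by
  change delaunayQuantity e a b c d < 0 at hD
  change delaunayQuantity ((a * c + b * d) / e) a d c b > 0
  rw [delaunayQuantity_ptolemy_flip ha.ne' hb.ne' hc.ne' hd.ne' he.ne']
  exact mul_pos (by positivity) (neg_pos.mpr hD)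
end

section
/- For a triangle with side lengths ℓ₁, ℓ₂, ℓ₃ satisfying the triangle inequality, let α₁, α₂, α₃ be the angles opposite each edge (defined via the law of cosines), and let λ_k = 2 ln ℓ_k; then ∂α₁/∂λ₁ = (1/2)(cot α₂ + cot α₃). -/
/-- With `λ₁ = 2 ln ℓ₁` and angles defined via the law of cosines,
`∂α₁/∂λ₁ = (1/2)(cot α₂ + cot α₃)`. -/
theorem angle_log_length_derivative (l1 l2 l3 : ℝ)
    (h1 : 0 < l1) (h2 : 0 < l2) (h3 : 0 < l3)
    (t1 : l1 < l2 + l3) (t2 : l2 < l1 + l3) (t3 : l3 < l1 + l2) :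
    let α₂ := Real.arccos ((l1 ^ 2 + l3 ^ 2 - l2 ^ 2) / (2 * l1 * l3))
    let α₃ := Real.arccos ((l1 ^ 2 + l2 ^ 2 - l3 ^ 2) / (2 * l1 * l2))
    HasDerivAt
      (fun t : ℝ =>
        Real.arccos ((l2 ^ 2 + l3 ^ 2 - Real.exp t) / (2 * l2 * l3)))
      ((1 / 2) * (Real.cos α₂ / Real.sin α₂ + Real.cos α₃ / Real.sin α₃))
      (2 * Real.log l1) := by
  intro α₂ α₃
  have hQpos : 0 < 2*l1^2*l2^2 + 2*l2^2*l3^2 + 2*l1^2*l3^2 - l1^4 - l2^4 - l3^4 := by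
    have : (2:ℝ)*l1^2*l2^2 + 2*l2^2*l3^2 + 2*l1^2*l3^2 - l1^4 - l2^4 - l3^4
        = (l1+l2+l3)*((l2+l3-l1)*((l1+l3-l2)*(l1+l2-l3))) := by ring
    rw [this]
    exact mul_pos (by linarith) (mul_pos (by linarith)
      (mul_pos (by linarith) (by linarith)))
  set Q : ℝ := 2*l1^2*l2^2 + 2*l2^2*l3^2 + 2*l1^2*l3^2 - l1^4 - l2^4 - l3^4 with hQdef
  have hsQ : 0 < Real.sqrt Q := Real.sqrt_pos.2 hQpos
  have hexp : Real.exp (2 * Real.log l1) = l1 ^ 2 := by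
    rw [show (2:ℝ) * Real.log l1 = Real.log (l1 ^ 2) by
      rw [Real.log_pow]; push_cast; ring]
    exact Real.exp_log (by positivity)
  -- inner derivative
  have hf : HasDerivAt (fun t : ℝ => (l2 ^ 2 + l3 ^ 2 - Real.exp t) / (2 * l2 * l3))
      (-l1 ^ 2 / (2 * l2 * l3)) (2 * Real.log l1) := by
    have := ((Real.hasDerivAt_exp (2 * Real.log l1)).const_sub
      (l2 ^ 2 + l3 ^ 2)).div_const (2 * l2 * l3)
    rw [hexp] at this
    convert this using 1
  set x1 : ℝ := (l2 ^ 2 + l3 ^ 2 - l1 ^ 2) / (2 * l2 * l3) with hx1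
  have hden1 : (0:ℝ) < 2 * l2 * l3 := by positivity
  have hx1lt : x1 < 1 := by
    rw [hx1, div_lt_one hden1]; nlinarith
  have hx1gt : -1 < x1 := by
    rw [hx1, lt_div_iff₀ hden1]; nlinarith
  have harc : HasDerivAt Real.arccos (-(1 / Real.sqrt (1 - x1 ^ 2))) x1 :=
    Real.hasDerivAt_arccos (ne_of_gt hx1gt) (ne_of_lt hx1lt)
  have hfx : (l2 ^ 2 + l3 ^ 2 - Real.exp (2 * Real.log l1)) / (2 * l2 * l3) = x1 := by
    rw [hexp]
  have harc' : HasDerivAt Real.arccos (-(1 / Real.sqrt (1 - x1 ^ 2)))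
      ((fun t : ℝ => (l2 ^ 2 + l3 ^ 2 - Real.exp t) / (2 * l2 * l3)) (2 * Real.log l1)) := by
    simp only []
    rw [hfx]; exact harc
  have hcomp := harc'.comp (2 * Real.log l1) hf
  have hsqrt1 : Real.sqrt (1 - x1 ^ 2) = Real.sqrt Q / (2 * l2 * l3) := by
    have h1x1 : 1 - x1 ^ 2 = Q / (2 * l2 * l3) ^ 2 := by
      rw [hx1, hQdef]; field_simp; ring
    rw [h1x1, Real.sqrt_div hQpos.le, Real.sqrt_sq hden1.le]
  -- compute cotangents
  have hden2 : (0:ℝ) < 2 * l1 * l3 := by positivity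
  have hden3 : (0:ℝ) < 2 * l1 * l2 := by positivity
  have hc2lt : (l1 ^ 2 + l3 ^ 2 - l2 ^ 2) / (2 * l1 * l3) < 1 := by
    rw [div_lt_one hden2]; nlinarith
  have hc2gt : -1 < (l1 ^ 2 + l3 ^ 2 - l2 ^ 2) / (2 * l1 * l3) := by
    rw [lt_div_iff₀ hden2]; nlinarith
  have hc3lt : (l1 ^ 2 + l2 ^ 2 - l3 ^ 2) / (2 * l1 * l2) < 1 := by
    rw [div_lt_one hden3]; nlinarith
  have hc3gt : -1 < (l1 ^ 2 + l2 ^ 2 - l3 ^ 2) / (2 * l1 * l2) := by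
    rw [lt_div_iff₀ hden3]; nlinarith
  have hcos2 : Real.cos α₂ = (l1 ^ 2 + l3 ^ 2 - l2 ^ 2) / (2 * l1 * l3) :=
    Real.cos_arccos hc2gt.le hc2lt.le
  have hcos3 : Real.cos α₃ = (l1 ^ 2 + l2 ^ 2 - l3 ^ 2) / (2 * l1 * l2) :=
    Real.cos_arccos hc3gt.le hc3lt.le
  have hsin2 : Real.sin α₂ = Real.sqrt Q / (2 * l1 * l3) := by
    show Real.sin (Real.arccos _) = _
    rw [Real.sin_arccos]
    have : 1 - ((l1 ^ 2 + l3 ^ 2 - l2 ^ 2) / (2 * l1 * l3)) ^ 2 = Q / (2 * l1 * l3) ^ 2 := by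
      rw [hQdef]; field_simp; ring
    rw [this, Real.sqrt_div hQpos.le, Real.sqrt_sq hden2.le]
  have hsin3 : Real.sin α₃ = Real.sqrt Q / (2 * l1 * l2) := by
    show Real.sin (Real.arccos _) = _
    rw [Real.sin_arccos]
    have : 1 - ((l1 ^ 2 + l2 ^ 2 - l3 ^ 2) / (2 * l1 * l2)) ^ 2 = Q / (2 * l1 * l2) ^ 2 := by
      rw [hQdef]; field_simp; ring
    rw [this, Real.sqrt_div hQpos.le, Real.sqrt_sq hden3.le]
  have hval : (1 / 2) * (Real.cos α₂ / Real.sin α₂ + Real.cos α₃ / Real.sin α₃)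
      = -(1 / Real.sqrt (1 - x1 ^ 2)) * (-l1 ^ 2 / (2 * l2 * l3)) := by
    rw [hcos2, hcos3, hsin2, hsin3, hsqrt1]
    field_simp
    ring
  rw [hval]
  exact hcomp
end
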